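/- Let m̂ be the unique positive real number satisfying 2Φ(−m̂) = m̂·φ(m̂). Then the function x ↦ 2Φ(−x) − x·φ(x) is strictly positive for 0 ≤ x < m̂ and strictly negative for x > m̂. -/

import Mathlib

/-!
The function `g(x) = 2Φ(−x) − xφ(x)` has derivative `(x² − 3)φ(x)`, so it is strictly
decreasing on `[0, √3]`. The Mills-ratio bound `xΦ(−x) ≤ φ(x)` gives `x g(x) ≤ (2 − x²)φ(x)`,
so `g < 0` as soon as `x² > 2`. Hence the zero `m̂` satisfies `m̂² ≤ 2 < 3`, and `g` changes
sign only there.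
-/

open MeasureTheory Set Filter Topology

/-- The standard normal cumulative distribution function
`Φ(x) = ∫_{−∞}^x (2π)^{−1/2} e^{−t²/2} dt`. -/
noncomputable def Phi (x : ℝ) : ℝ :=
  ∫ t in Set.Iic x, (Real.sqrt (2 * Real.pi))⁻¹ * Real.exp (-t ^ 2 / 2)

/-- The standard normal density `φ(x) = (2π)^{−1/2} e^{−x²/2}`. -/
noncomputable def phi (x : ℝ) : ℝ :=
  (Real.sqrt (2 * Real.pi))⁻¹ * Real.exp (-x ^ 2 / 2)

theorem hasDerivAt_integral_Iic {E : Type*} [NormedAddCommGroup E] [NormedSpace ℝ E]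
    [CompleteSpace E] {f : ℝ → E} (hf : Continuous f) (hfi : Integrable f) (x : ℝ) :
    HasDerivAt (fun y => ∫ t in Iic y, f t) (f x) x := by
  have h : (fun y => ∫ t in Iic y, f t) =
      fun y => (∫ t in Iic 0, f t) + ∫ t in (0 : ℝ)..y, f t := by
    ext y
    rw [← intervalIntegral.integral_Iic_sub_Iic hfi.integrableOn hfi.integrableOn]
    abel
  rw [h]
  exact (hf.integral_hasStrictDerivAt 0 x).hasDerivAt.const_add _

theorem phi_pos (x : ℝ) : 0 < phi x := by
  unfold phi
  positivity

theorem phi_neg (x : ℝ) : phi (-x) = phi x := by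
  simp only [phi, even_two.neg_pow]

theorem continuous_phi : Continuous phi := by
  unfold phi
  fun_prop

theorem phi_eq_mul_exp_neg_mul_sq (x : ℝ) :
    phi x = (Real.sqrt (2 * Real.pi))⁻¹ * Real.exp (-2⁻¹ * x ^ 2) := by
  rw [phi, neg_div, div_eq_inv_mul, neg_mul]

theorem integrable_phi : Integrable phi := by
  simp_rw [funext phi_eq_mul_exp_neg_mul_sq]
  exact (integrable_exp_neg_mul_sq (by norm_num)).const_mul _

theorem integrable_mul_phi : Integrable fun x => x * phi x := by
  simp_rw [phi_eq_mul_exp_neg_mul_sq, mul_left_comm _ (Real.sqrt _)⁻¹]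
  exact (integrable_mul_exp_neg_mul_sq (by norm_num)).const_mul _

theorem integrable_neg_mul_phi : Integrable fun x => -x * phi x := by
  simpa only [neg_mul] using integrable_mul_phi.fun_neg

theorem hasDerivAt_phi (x : ℝ) : HasDerivAt phi (-x * phi x) x := by
  have hexponent : HasDerivAt (fun t => -t ^ 2 / 2) (-x) x :=
    ((hasDerivAt_pow 2 x).fun_neg.div_const 2).congr_deriv (by ring)
  exact (hexponent.exp.const_mul _).congr_deriv (by rw [phi]; ring)

theorem hasDerivAt_Phi (x : ℝ) : HasDerivAt Phi (phi x) x :=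
  hasDerivAt_integral_Iic continuous_phi integrable_phi x

theorem tendsto_phi_atBot : Tendsto phi atBot (𝓝 0) :=
  tendsto_zero_of_hasDerivAt_of_integrableOn_Iic (a := 0) (fun x _ => hasDerivAt_phi x)
    integrable_neg_mul_phi.integrableOn integrable_phi.integrableOn

theorem integral_Iic_neg_mul_phi (a : ℝ) : ∫ t in Iic a, -t * phi t = phi a := by
  rw [integral_Iic_of_hasDerivAt_of_tendsto' (fun x _ => hasDerivAt_phi x)
    integrable_neg_mul_phi.integrableOn tendsto_phi_atBot, sub_zero]

/-- Mills' inequality: on `t ≤ −x` the weight `x` is dominated by `−t`, and `−tφ(t) = φ'(t)`. -/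
theorem mul_Phi_neg_le_phi (x : ℝ) : x * Phi (-x) ≤ phi x := by
  calc x * Phi (-x) = ∫ t in Iic (-x), x * phi t := (integral_const_mul x _).symm
    _ ≤ ∫ t in Iic (-x), -t * phi t := by
        refine setIntegral_mono_on (integrable_phi.const_mul x).integrableOn
          integrable_neg_mul_phi.integrableOn measurableSet_Iic fun t ht => ?_
        exact mul_le_mul_of_nonneg_right (le_neg_of_le_neg ht) (phi_pos t).le
    _ = phi x := by rw [integral_Iic_neg_mul_phi, phi_neg]

theorem hasDerivAt_two_Phi_neg_sub_mul_phi (x : ℝ) :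
    HasDerivAt (fun x => 2 * Phi (-x) - x * phi x) ((x ^ 2 - 3) * phi x) x := by
  have hPhi : HasDerivAt (fun y => Phi (-y)) (phi (-x) * -1) x :=
    (hasDerivAt_Phi (-x)).comp x (hasDerivAt_neg x)
  refine ((hPhi.const_mul 2).sub ((hasDerivAt_id x).mul (hasDerivAt_phi x))).congr_deriv ?_
  rw [phi_neg, id]
  ring

theorem strictAntiOn_two_Phi_neg_sub_mul_phi :
    StrictAntiOn (fun x => 2 * Phi (-x) - x * phi x) (Icc 0 (Real.sqrt 3)) := by
  have hderiv := hasDerivAt_two_Phi_neg_sub_mul_phi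
  refine strictAntiOn_of_deriv_neg (convex_Icc _ _)
    (fun x _ => (hderiv x).continuousAt.continuousWithinAt) fun x hx => ?_
  rw [interior_Icc] at hx
  have hx3 : x ^ 2 < 3 := (Real.lt_sqrt hx.1.le).1 hx.2
  rw [(hderiv x).deriv]
  exact mul_neg_of_neg_of_pos (by linarith) (phi_pos x)

theorem two_Phi_neg_sub_mul_phi_neg {x : ℝ} (hx : 0 < x) (hx2 : 2 < x ^ 2) :
    2 * Phi (-x) - x * phi x < 0 := by
  have hmills := mul_Phi_neg_le_phi x
  have hphi := phi_pos x
  have : x * (2 * Phi (-x) - x * phi x) < 0 := by nlinarith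
  exact neg_of_mul_neg_right this hx.le

/-- Let `m̂` be the (unique) positive real number satisfying
`2Φ(−m̂) = m̂·φ(m̂)`. Then `x ↦ 2Φ(−x) − x·φ(x)` is strictly positive for `0 ≤ x < m̂`
and strictly negative for `x > m̂`. -/
theorem sign_of_two_Phi_neg_sub_mul_phi (m : ℝ) (hm : 0 < m)
    (hmeq : 2 * Phi (-m) = m * phi m) :
    (∀ x : ℝ, 0 ≤ x → x < m → 0 < 2 * Phi (-x) - x * phi x) ∧
    (∀ x : ℝ, m < x → 2 * Phi (-x) - x * phi x < 0) := by
  have hanti := strictAntiOn_two_Phi_neg_sub_mul_phi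
  have hm2 : m ^ 2 ≤ 2 := by
    by_contra! h
    exact (two_Phi_neg_sub_mul_phi_neg hm h).ne (sub_eq_zero.2 hmeq)
  have hmI : m ∈ Icc 0 (Real.sqrt 3) := ⟨hm.le, (Real.le_sqrt hm.le (by norm_num)).2 (by linarith)⟩
  refine ⟨fun x hx0 hxm => ?_, fun x hxm => ?_⟩
  · have := hanti ⟨hx0, hxm.le.trans hmI.2⟩ hmI hxm
    simp only at this
    linarith
  · have hx0 : 0 ≤ x := (hm.trans hxm).le
    rcases le_or_gt (x ^ 2) 3 with hx3 | hx3
    · have := hanti hmI ⟨hx0, (Real.le_sqrt hx0 (by norm_num)).2 hx3⟩ hxm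
      simp only at this
      linarith
    · exact two_Phi_neg_sub_mul_phi_neg (hm.trans hxm) (by linarith)
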